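/- arXiv:1606.05097 — 2 statements merged into one kernel-verified Lean document; each statement's English description precedes it below -/
import Mathlib

section
/- Let a, a′ be real numbers with 0 < a ≤ a′. Then the Freund bivariate exponential density with parameters α = β = a and α′ = β′ = a′, namely h(x,y) = a′·a·exp(−(2a−a′)y − a′x) for x ≥ y > 0 and h(x,y) = a·a′·exp(−(2a−a′)x − a′y) for y > x > 0, is TP_∞ on (0,∞)×(0,∞). -/
open Real Set

/-- `K` is totally positive of all orders (TP_∞) on `S × T`. -/
def TPinf (K : ℝ → ℝ → ℝ) (S T : Set ℝ) : Prop :=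
  ∀ s : ℕ, 2 ≤ s → ∀ x y : Fin s → ℝ, StrictMono x → StrictMono y →
    (∀ i, x i ∈ S) → (∀ i, y i ∈ T) →
      0 ≤ (Matrix.of fun i j => K (x i) (y j)).det

private lemma min_step (n : ℕ)
    (ih : ∀ u v : Fin n → ℝ, Monotone u → Monotone v → (∀ i, 0 ≤ u i) → (∀ j, 0 ≤ v j) →
      0 ≤ (Matrix.of fun i j => min (u i) (v j)).det)
    (u v : Fin (n + 1) → ℝ) (hu : Monotone u) (hv : Monotone v)
    (hu0 : 0 ≤ u 0) (huv : u 0 ≤ v 0) :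
    0 ≤ (Matrix.of fun i j => min (u i) (v j)).det := by
  set M : Matrix (Fin (n+1)) (Fin (n+1)) ℝ := Matrix.of fun i j => min (u i) (v j) with hM
  have hMe : ∀ i j : Fin (n+1), M i j = min (u i) (v j) := fun _ _ => rfl
  -- subtract row 0 from the other rows
  set N : Matrix (Fin (n+1)) (Fin (n+1)) ℝ :=
    Matrix.of fun i j => if i = 0 then M i j else M i j - M 0 j with hN
  have hNe : ∀ i j : Fin (n+1), i ≠ 0 → N i j = M i j - M 0 j := fun i j h => if_neg h
  have hNe0 : ∀ j : Fin (n+1), N 0 j = M 0 j := fun j => by rw [hN]; simp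
  have hMN : M.det = N.det := by
    apply Matrix.det_eq_of_forall_row_eq_smul_add_const
      (fun i => if i = 0 then (0:ℝ) else 1) 0 (by simp)
    intro i j
    by_cases hi : i = 0
    · subst hi; rw [hNe0, if_pos rfl]; ring
    · rw [hNe i j hi, hNe0, if_neg hi]; ring
  -- subtract column 0 from the other columns
  set P : Matrix (Fin (n+1)) (Fin (n+1)) ℝ :=
    Matrix.of fun i j => if j = 0 then N i j else N i j - N i 0 with hP
  have hPe : ∀ i j : Fin (n+1), j ≠ 0 → P i j = N i j - N i 0 := fun i j h => if_neg h
  have hPe0 : ∀ i : Fin (n+1), P i 0 = N i 0 := fun i => by rw [hP]; simp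
  have hNP : N.det = P.det := by
    rw [← Matrix.det_transpose N, ← Matrix.det_transpose P]
    apply Matrix.det_eq_of_forall_row_eq_smul_add_const
      (fun j => if j = 0 then (0:ℝ) else 1) 0 (by simp)
    intro j i
    show N i j = P i j + _
    by_cases hj : j = 0
    · subst hj; rw [hPe0, if_pos rfl]
      show N i 0 = P i 0 + 0 * P i 0
      rw [hPe0]; ring
    · rw [hPe i j hj, if_neg hj]
      show N i j = N i j - N i 0 + 1 * P i 0
      rw [hPe0]; ring
  -- row 0 of `M` is constantly `u 0`
  have hrow0 : ∀ j, M 0 j = u 0 := fun j => min_eq_left (huv.trans (hv (Fin.zero_le j)))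
  have hP00 : P 0 0 = u 0 := by rw [hPe0, hNe0, hrow0]
  have hP0 : ∀ j : Fin (n+1), j ≠ 0 → P 0 j = 0 := by
    intro j hj
    rw [hPe 0 j hj, hNe0, hNe0, hrow0, hrow0]; ring
  -- Laplace expansion of `P` along row 0
  rw [hMN, hNP, Matrix.det_succ_row_zero]
  rw [Finset.sum_eq_single 0]
  · have hsub : P.submatrix Fin.succ ((0 : Fin (n+1)).succAbove) =
        Matrix.of fun i j : Fin n =>
          min (max (u i.succ - v 0) 0) (v j.succ - v 0) := by
      ext i j
      have his : (i.succ : Fin (n+1)) ≠ 0 := Fin.succ_ne_zero i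
      have hjs : (j.succ : Fin (n+1)) ≠ 0 := Fin.succ_ne_zero j
      rw [Matrix.submatrix_apply, Fin.succAbove_zero]
      show P i.succ j.succ = min (max (u i.succ - v 0) 0) (v j.succ - v 0)
      rw [hPe _ _ hjs, hNe _ _ his, hNe _ _ his, hrow0, hrow0, hMe, hMe]
      have hvj : v 0 ≤ v j.succ := hv (Fin.zero_le _)
      rcases le_total (u i.succ) (v 0) with h | h
      · rw [min_eq_left (h.trans hvj), min_eq_left h,
          max_eq_right (by linarith), min_eq_left (by linarith)]
        ring
      · rw [min_eq_right h, max_eq_left (by linarith),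
          show min (u i.succ) (v j.succ) - u 0 - (v 0 - u 0)
            = min (u i.succ) (v j.succ) - v 0 by ring,
          min_sub_sub_right]
    have hdet : 0 ≤ (P.submatrix Fin.succ ((0 : Fin (n+1)).succAbove)).det := by
      rw [hsub]
      apply ih
      · intro i j hij
        exact max_le_max (sub_le_sub_right (hu (Fin.succ_le_succ_iff.mpr hij)) _) le_rfl
      · intro i j hij
        exact sub_le_sub_right (hv (Fin.succ_le_succ_iff.mpr hij)) _
      · intro i; exact le_max_right _ _
      · intro j; have := hv (Fin.zero_le (Fin.succ j)); linarith
    have h1 : ((-1 : ℝ) ^ ((0 : Fin (n+1)) : ℕ)) = 1 := by simp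
    rw [h1, hP00, one_mul]
    exact mul_nonneg hu0 hdet
  · intro j _ hj
    rw [hP0 j hj]; ring
  · intro h; exact absurd (Finset.mem_univ 0) h

private lemma det_min_nonneg : ∀ (n : ℕ) (u v : Fin n → ℝ), Monotone u → Monotone v →
    (∀ i, 0 ≤ u i) → (∀ j, 0 ≤ v j) →
    0 ≤ (Matrix.of fun i j => min (u i) (v j)).det := by
  intro n
  induction n with
  | zero => intro u v _ _ _ _; simp [Matrix.det_fin_zero]
  | succ n ih =>
    intro u v hu hv hu0 hv0
    rcases le_total (u 0) (v 0) with h | h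
    · exact min_step n ih u v hu hv (hu0 0) h
    · rw [← Matrix.det_transpose]
      have htr : (Matrix.of fun i j => min (u i) (v j)).transpose =
          Matrix.of fun i j => min (v i) (u j) := by
        ext i j; exact min_comm _ _
      rw [htr]
      exact min_step n ih v u hv hu (hv0 0) h

theorem freund_density_tp_inf (a a' : ℝ) (ha : 0 < a) (haa' : a ≤ a') :
    TPinf (fun x y =>
        if y ≤ x then a' * a * Real.exp (-(2 * a - a') * y - a' * x)
        else a * a' * Real.exp (-(2 * a - a') * x - a' * y))
      (Ioi 0) (Ioi 0) := by
  intro s _ x y hx hy _ _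
  have ha' : 0 < a' := lt_of_lt_of_le ha haa'
  set c : ℝ := 2 * (a' - a) with hc
  have hc0 : 0 ≤ c := by rw [hc]; linarith
  -- factor the kernel
  have hkey : ∀ p q : ℝ,
      (if q ≤ p then a' * a * Real.exp (-(2 * a - a') * q - a' * p)
        else a * a' * Real.exp (-(2 * a - a') * p - a' * q))
      = (a * a' * Real.exp (-a' * p)) *
        (Real.exp (-a' * q) * min (Real.exp (c * p)) (Real.exp (c * q))) := by
    intro p q
    by_cases h : q ≤ p
    · rw [if_pos h, min_eq_right (Real.exp_le_exp.2 (by nlinarith))]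
      rw [show -(2 * a - a') * q - a' * p = -a' * p + (-a' * q + c * q) by rw [hc]; ring,
        Real.exp_add, Real.exp_add]
      ring
    · rw [if_neg h,
        min_eq_left (Real.exp_le_exp.2 (by nlinarith [le_of_not_ge h]))]
      rw [show -(2 * a - a') * p - a' * q = -a' * p + (-a' * q + c * p) by rw [hc]; ring,
        Real.exp_add, Real.exp_add]
      ring
  have hfact : (Matrix.of fun i j =>
      (if y j ≤ x i then a' * a * Real.exp (-(2 * a - a') * (y j) - a' * (x i))
        else a * a' * Real.exp (-(2 * a - a') * (x i) - a' * (y j))))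
      = Matrix.of fun i j => (a * a' * Real.exp (-a' * x i)) *
          ((Matrix.of fun i j => (Real.exp (-a' * y j)) *
            ((Matrix.of fun i j =>
              min (Real.exp (c * x i)) (Real.exp (c * y j))) i j)) i j) := by
    ext i j
    exact hkey (x i) (y j)
  show 0 ≤ (Matrix.of fun i j =>
      (if y j ≤ x i then a' * a * Real.exp (-(2 * a - a') * (y j) - a' * (x i))
        else a * a' * Real.exp (-(2 * a - a') * (x i) - a' * (y j)))).det
  rw [hfact, Matrix.det_mul_column, Matrix.det_mul_row]
  have hmin : 0 ≤ (Matrix.of fun i j =>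
      min (Real.exp (c * x i)) (Real.exp (c * y j))).det := by
    apply det_min_nonneg
    · intro i j hij
      exact Real.exp_le_exp.2 (mul_le_mul_of_nonneg_left (hx.monotone hij) hc0)
    · intro i j hij
      exact Real.exp_le_exp.2 (mul_le_mul_of_nonneg_left (hy.monotone hij) hc0)
    · intro i; exact (Real.exp_pos _).le
    · intro j; exact (Real.exp_pos _).le
  have h1 : 0 ≤ ∏ i, (a * a' * Real.exp (-a' * x i)) := by
    apply Finset.prod_nonneg; intro i _
    exact mul_nonneg (mul_nonneg ha.le ha'.le) (Real.exp_pos _).le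
  have h2 : 0 ≤ ∏ j, Real.exp (-a' * y j) := by
    apply Finset.prod_nonneg; intro j _; exact (Real.exp_pos _).le
  exact mul_nonneg h1 (mul_nonneg h2 hmin)
end

section
/- Let R₁, R₂, R₃ : [0,∞) → [0,∞) be nondecreasing functions. Then the generalized Marshall–Olkin survival function H̄(x,y) = exp(−R₁(x) − R₂(y) − R₃(max{x,y})) is TP_∞ on [0,∞)×[0,∞). -/
open Real Set


lemma min_det_step {n : ℕ} (a b : Fin (n + 1) → ℝ) (ha : Monotone a) (h : b 0 ≤ a 0) :
    (Matrix.of fun i j => min (a i) (b j)).det =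
      b 0 * (Matrix.of fun (i j : Fin n) =>
        min (a i.succ - a 0) (max (b j.succ - a 0) 0)).det := by
  set M : Matrix (Fin (n + 1)) (Fin (n + 1)) ℝ := Matrix.of fun i j => min (a i) (b j) with hM
  set A : Matrix (Fin (n + 1)) (Fin (n + 1)) ℝ :=
    Matrix.of fun i j => M i j + (if i = 0 then (0 : ℝ) else -1) * M 0 j with hA
  have hdet : A.det = M.det :=
    Matrix.det_eq_of_forall_row_eq_smul_add_const (fun i => if i = 0 then (0 : ℝ) else -1) 0
      (if_pos rfl) (fun i j => rfl)
  have hA0 : ∀ i, i ≠ 0 → A i 0 = 0 := by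
    intro i hi
    have h1 : b 0 ≤ a i := le_trans h (ha (Fin.zero_le i))
    simp only [hA, hM, Matrix.of_apply, if_neg hi]
    rw [min_eq_right h1, min_eq_right h]
    ring
  have hA00 : A 0 0 = b 0 := by
    simp only [hA, hM, Matrix.of_apply, if_pos rfl]
    rw [min_eq_right h]
    norm_num
  rw [← hdet, Matrix.det_succ_column_zero, Finset.sum_eq_single 0]
  · rw [hA00]
    simp only [Fin.val_zero, pow_zero, one_mul, Fin.succAbove_zero]
    congr 1
    congr 1
    ext i j
    have hi : (i.succ : Fin (n + 1)) ≠ 0 := Fin.succ_ne_zero i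
    have hai : a 0 ≤ a i.succ := ha (Fin.zero_le _)
    simp only [Matrix.submatrix_apply, hA, hM, Matrix.of_apply, if_neg hi]
    rcases le_total (b j.succ) (a 0) with hb | hb
    · have h1 : b j.succ ≤ a i.succ := le_trans hb hai
      rw [min_eq_right h1, min_eq_right hb,
        max_eq_right (by linarith), min_eq_right (by linarith)]
      ring
    · rw [min_eq_left hb, max_eq_left (by linarith)]
      rcases le_total (a i.succ) (b j.succ) with h2 | h2
      · rw [min_eq_left h2, min_eq_left (by linarith)]
        ring
      · rw [min_eq_right h2, min_eq_right (by linarith)]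
        ring
  · intro i _ hi
    rw [hA0 i hi]
    ring
  · intro hmem
    exact absurd (Finset.mem_univ _) hmem

lemma min_det_nonneg : ∀ (n : ℕ) (a b : Fin n → ℝ), Monotone a → Monotone b →
    (∀ i, 0 ≤ a i) → (∀ i, 0 ≤ b i) →
    0 ≤ (Matrix.of fun i j => min (a i) (b j)).det := by
  intro n
  induction n with
  | zero => intro a b _ _ _ _; simp [Matrix.det_isEmpty]
  | succ n ih =>
    intro a b ha hb hann hbnn
    rcases le_total (b 0) (a 0) with h | h
    · rw [min_det_step a b ha h]
      refine mul_nonneg (hbnn 0) (ih _ _ ?_ ?_ ?_ ?_)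
      · intro i j hij
        exact sub_le_sub_right (ha (Fin.succ_le_succ_iff.2 hij)) _
      · intro i j hij
        exact max_le_max (sub_le_sub_right (hb (Fin.succ_le_succ_iff.2 hij)) _) le_rfl
      · intro i
        simp only [sub_nonneg]
        exact ha (Fin.zero_le _)
      · intro i; exact le_max_right _ _
    · have heq : (Matrix.of fun i j => min (a i) (b j)).det =
          (Matrix.of fun i j => min (b i) (a j)).det := by
        rw [← Matrix.det_transpose (Matrix.of fun i j => min (b i) (a j))]
        congr 1
        ext i j
        simp [min_comm]
      rw [heq, min_det_step b a hb h]
      refine mul_nonneg (hann 0) (ih _ _ ?_ ?_ ?_ ?_)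
      · intro i j hij
        exact sub_le_sub_right (hb (Fin.succ_le_succ_iff.2 hij)) _
      · intro i j hij
        exact max_le_max (sub_le_sub_right (ha (Fin.succ_le_succ_iff.2 hij)) _) le_rfl
      · intro i
        simp only [sub_nonneg]
        exact hb (Fin.zero_le _)
      · intro i; exact le_max_right _ _

theorem generalized_marshall_olkin_survival_tp_inf (R₁ R₂ R₃ : ℝ → ℝ)
    (hR₁mono : MonotoneOn R₁ (Ici 0)) (hR₂mono : MonotoneOn R₂ (Ici 0))
    (hR₃mono : MonotoneOn R₃ (Ici 0))
    (hR₁nn : ∀ x : ℝ, 0 ≤ x → 0 ≤ R₁ x) (hR₂nn : ∀ x : ℝ, 0 ≤ x → 0 ≤ R₂ x)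
    (hR₃nn : ∀ x : ℝ, 0 ≤ x → 0 ≤ R₃ x) :
    TPinf (fun x y => Real.exp (-R₁ x - R₂ y - R₃ (max x y))) (Ici 0) (Ici 0) := by
  intro s _ x y hx hy hxS hyS
  set c : Fin s → ℝ := fun i => Real.exp (-R₁ (x i)) with hc
  set d : Fin s → ℝ := fun j => Real.exp (-R₂ (y j)) with hd
  set N : Matrix (Fin s) (Fin s) ℝ :=
    Matrix.of fun i j => min (Real.exp (-R₃ (x i))) (Real.exp (-R₃ (y j))) with hN
  have key : (Matrix.of fun i j =>
      (fun x y => Real.exp (-R₁ x - R₂ y - R₃ (max x y))) (x i) (y j))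
      = Matrix.diagonal c * N * Matrix.diagonal d := by
    ext i j
    simp only [Matrix.mul_diagonal, Matrix.diagonal_mul, Matrix.of_apply, hN]
    have hmin : Real.exp (-R₃ (max (x i) (y j)))
        = min (Real.exp (-R₃ (x i))) (Real.exp (-R₃ (y j))) := by
      rcases le_total (x i) (y j) with h | h
      · rw [max_eq_right h, min_eq_right]
        exact Real.exp_le_exp.2 (neg_le_neg (hR₃mono (hxS i) (hyS j) h))
      · rw [max_eq_left h, min_eq_left]
        exact Real.exp_le_exp.2 (neg_le_neg (hR₃mono (hyS j) (hxS i) h))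
    rw [show -R₁ (x i) - R₂ (y j) - R₃ (max (x i) (y j))
        = (-R₁ (x i)) + (-R₃ (max (x i) (y j))) + (-R₂ (y j)) by ring,
      Real.exp_add, Real.exp_add, hmin, hc, hd]
  rw [key, Matrix.det_mul, Matrix.det_mul, Matrix.det_diagonal, Matrix.det_diagonal]
  have hNdet : 0 ≤ N.det := by
    rw [← Matrix.det_submatrix_equiv_self (Fin.revPerm : Fin s ≃ Fin s) N]
    have heq : N.submatrix Fin.revPerm Fin.revPerm
        = Matrix.of fun i j =>
          min ((fun i => Real.exp (-R₃ (x (Fin.rev i)))) i)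
              ((fun j => Real.exp (-R₃ (y (Fin.rev j)))) j) := by
      ext i j
      simp [hN]
    rw [heq]
    refine min_det_nonneg s _ _ ?_ ?_ (fun i => (Real.exp_pos _).le)
      (fun i => (Real.exp_pos _).le)
    · intro i j hij
      exact Real.exp_le_exp.2 (neg_le_neg (hR₃mono (hxS _) (hxS _)
        (hx.monotone (Fin.rev_le_rev.2 hij))))
    · intro i j hij
      exact Real.exp_le_exp.2 (neg_le_neg (hR₃mono (hyS _) (hyS _)
        (hy.monotone (Fin.rev_le_rev.2 hij))))
  exact mul_nonneg (mul_nonneg (Finset.prod_nonneg fun i _ => (Real.exp_pos _).le) hNdet)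
    (Finset.prod_nonneg fun i _ => (Real.exp_pos _).le)
end
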